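/- arXiv:1506.01183 — 5 statements merged into one kernel-verified Lean document; each statement's English description precedes it below -/
import Mathlib

section
/- Let f : ℝ → ℝ be continuous and integrable, and set b = G₂∗f. Then b is continuously differentiable with b'(x) = ∫_ℝ ∂_xG₂(x−y) f(y) dy for every x, both b and b' belong to L²(ℝ), and ‖b‖_{L²(ℝ)}² + ‖b'‖_{L²(ℝ)}² ≤ (5/32) ‖f‖_{L¹(ℝ)}². -/
open MeasureTheory

/-- The Green's function `G₂(x) = ¼ e^{-2|x|}` of `4 - ∂ₓ²`. -/
noncomputable def G2 (x : ℝ) : ℝ := (1 / 4) * Real.exp (-(2 * |x|))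

/-- The derivative `∂ₓG₂(x) = -½ sgn(x) e^{-2|x|}`. -/
noncomputable def G2x (x : ℝ) : ℝ := -(1 / 2) * Real.sign x * Real.exp (-(2 * |x|))

/-- Convolution `(G ∗ f)(x) = ∫ G(x - y) f(y) dy`. -/
noncomputable def conv (G f : ℝ → ℝ) (x : ℝ) : ℝ := ∫ y : ℝ, G (x - y) * f y

/-!
Away from the origin `G₂` is smooth with derivative `∂ₓG₂`, and `G₂` is `½`-Lipschitz, so
differentiation under the integral sign (dominated by `½ |f|`) gives `b' = ∂ₓG₂ ∗ f`; this is
continuous by dominated convergence, since `∂ₓG₂` is bounded and continuous off the null set `{0}`.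

For the `L²` bounds, Cauchy–Schwarz for the measure `|f(y)| dy` gives
`|(G ∗ f)(x)|² ≤ (∫ |G(x - y)|² |f(y)| dy) ‖f‖₁`, and integrating in `x` (Tonelli, translation
invariance) yields `‖G ∗ f‖₂² ≤ ‖G‖₂² ‖f‖₁²`. With `‖G₂‖₂² = 1/32` and `‖∂ₓG₂‖₂² = 1/8` this is
the claimed bound.
-/

open Real Set Filter
open scoped ENNReal NNReal

theorem Real.sign_eq_coe_sign (x : ℝ) : Real.sign x = (SignType.sign x : ℝ) := by
  rcases lt_trichotomy x 0 with hx | rfl | hx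
  · simp [Real.sign_of_neg hx, hx]
  · simp
  · simp [Real.sign_of_pos hx, hx]

theorem Real.monotone_sign : Monotone Real.sign := by
  intro a b hab
  rcases lt_trichotomy a 0 with ha | rfl | ha <;> rcases lt_trichotomy b 0 with hb | rfl | hb <;>
    simp [Real.sign_of_neg, Real.sign_of_pos, *] <;> linarith

theorem integral_exp_neg_mul_abs {c : ℝ} (hc : 0 < c) : ∫ x, exp (-(c * |x|)) = 2 / c := by
  rw [integral_comp_abs (f := fun x => exp (-(c * x)))]
  simp_rw [← neg_mul]
  rw [integral_exp_mul_Ioi (neg_lt_zero.2 hc)]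
  field_simp
  simp

theorem integrable_exp_neg_mul_abs {c : ℝ} (hc : 0 < c) :
    Integrable fun x : ℝ => exp (-(c * |x|)) :=
  .of_integral_ne_zero (by rw [integral_exp_neg_mul_abs hc]; positivity)

section Convolution

variable {G G' f : ℝ → ℝ}

theorem integrable_conv_integrand {C : ℝ} (hG : Measurable G) (hGC : ∀ z, ‖G z‖ ≤ C)
    (hf : Integrable f) (x : ℝ) : Integrable fun y => G (x - y) * f y :=
  hf.bdd_mul (hG.comp (measurable_const.sub measurable_id)).aestronglyMeasurable
    (ae_of_all _ fun y => hGC (x - y))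

theorem hasDerivAt_conv {K : ℝ≥0} {C : ℝ} (hG : LipschitzWith K G) (hGC : ∀ z, ‖G z‖ ≤ C)
    (hG' : Measurable G') (hGG' : ∀ z ≠ 0, HasDerivAt G (G' z) z) (hf : Integrable f)
    (x : ℝ) : HasDerivAt (conv G f) (conv G' f x) x := by
  have hGm : Measurable G := hG.continuous.measurable
  have hlip : ∀ y, LipschitzWith (Real.nnabs (K * ‖f y‖)) fun x => G (x - y) * f y := by
    intro y
    refine LipschitzWith.of_dist_le_mul fun a b => ?_
    rw [Real.coe_nnabs, abs_of_nonneg (by positivity), dist_eq_norm, ← sub_mul, norm_mul,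
      mul_right_comm, ← dist_eq_norm]
    gcongr
    simpa using hG.dist_le_mul (a - y) (b - y)
  have hdiff : ∀ᵐ y, HasDerivAt (fun x => G (x - y) * f y) (G' (x - y) * f y) x := by
    filter_upwards [volume.ae_ne x] with y hy
    exact ((hGG' _ (sub_ne_zero.2 hy.symm)).comp_sub_const x y).mul_const (f y)
  exact (hasDerivAt_integral_of_dominated_loc_of_lip univ_mem
    (Eventually.of_forall fun x' => (integrable_conv_integrand hGm hGC hf x').aestronglyMeasurable)
    (integrable_conv_integrand hGm hGC hf x)
    ((hG'.comp (measurable_const.sub measurable_id)).aestronglyMeasurable.mul hf.1)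
    (ae_of_all _ fun y => (hlip y).lipschitzOnWith) (hf.norm.const_mul K) hdiff).2

theorem continuous_conv {C : ℝ} (hG : Measurable G) (hGC : ∀ z, ‖G z‖ ≤ C)
    (hGc : ∀ z ≠ 0, ContinuousAt G z) (hf : Integrable f) : Continuous (conv G f) := by
  refine continuous_iff_continuousAt.2 fun x₀ => continuousAt_of_dominated
    (bound := fun y => C * ‖f y‖)
    (Eventually.of_forall fun x => (integrable_conv_integrand hG hGC hf x).aestronglyMeasurable)
    (Eventually.of_forall fun x => ae_of_all _ fun y => ?_) (hf.norm.const_mul C) ?_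
  · rw [norm_mul]
    exact mul_le_mul_of_nonneg_right (hGC _) (norm_nonneg _)
  · filter_upwards [volume.ae_ne x₀] with y hy
    exact ((hGc _ (sub_ne_zero.2 hy.symm)).comp (f := (· - y)) (by fun_prop)).mul_const (f y)

end Convolution

theorem ENNReal.lintegral_mul_sq_le {α : Type*} [MeasurableSpace α] {μ : Measure α}
    {g F : α → ℝ≥0∞} (hg : AEMeasurable g μ) (hF : AEMeasurable F μ) :
    (∫⁻ a, g a * F a ∂μ) ^ 2 ≤ (∫⁻ a, g a ^ 2 * F a ∂μ) * ∫⁻ a, F a ∂μ := by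
  have key := ENNReal.lintegral_mul_norm_pow_le ((hg.pow_const 2).mul hF) hF
    (p := 1 / 2) (q := 1 / 2) (by norm_num) (by norm_num) (by norm_num)
  have hsplit : ∀ a, (g a ^ 2 * F a) ^ (1 / 2 : ℝ) * F a ^ (1 / 2 : ℝ) = g a * F a := by
    intro a
    rw [ENNReal.mul_rpow_of_nonneg _ _ (by norm_num), mul_assoc,
      ← ENNReal.rpow_add_of_nonneg _ _ (by norm_num) (by norm_num), ← ENNReal.rpow_natCast,
      ← ENNReal.rpow_mul]
    norm_num
  simp only [Pi.mul_apply, hsplit] at key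
  calc (∫⁻ a, g a * F a ∂μ) ^ 2
      ≤ ((∫⁻ a, g a ^ 2 * F a ∂μ) ^ (1 / 2 : ℝ) * (∫⁻ a, F a ∂μ) ^ (1 / 2 : ℝ)) ^ 2 := by
        gcongr
    _ = (∫⁻ a, g a ^ 2 * F a ∂μ) * ∫⁻ a, F a ∂μ := by
        rw [mul_pow, ← ENNReal.rpow_natCast, ← ENNReal.rpow_natCast (_ ^ _), ← ENNReal.rpow_mul,
          ← ENNReal.rpow_mul]
        norm_num

theorem sq_eLpNorm_two {α E : Type*} [MeasurableSpace α] {μ : Measure α} [NormedAddCommGroup E]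
    (g : α → E) : eLpNorm g 2 μ ^ 2 = ∫⁻ x, ‖g x‖ₑ ^ 2 ∂μ := by
  simpa using eLpNorm_nnreal_pow_eq_lintegral (f := g) (μ := μ) (p := 2) two_ne_zero

theorem sq_eLpNorm_two_eq_ofReal_integral {α : Type*} [MeasurableSpace α] {μ : Measure α}
    {g : α → ℝ} (hg : Integrable (fun x => g x ^ 2) μ) :
    eLpNorm g 2 μ ^ 2 = ENNReal.ofReal (∫ x, g x ^ 2 ∂μ) := by
  rw [sq_eLpNorm_two, ofReal_integral_eq_lintegral_ofReal hg (ae_of_all _ fun x => sq_nonneg _)]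
  congr 1 with x
  rw [Real.enorm_eq_ofReal_abs, ← ENNReal.ofReal_pow (abs_nonneg _), sq_abs]

theorem sq_eLpNorm_conv_le {G f : ℝ → ℝ} (hG : Measurable G) (hf : AEMeasurable f) :
    eLpNorm (conv G f) 2 volume ^ 2 ≤ eLpNorm G 2 volume ^ 2 * eLpNorm f 1 volume ^ 2 := by
  rw [sq_eLpNorm_two, sq_eLpNorm_two, eLpNorm_one_eq_lintegral_enorm]
  set N := ∫⁻ y, ‖f y‖ₑ
  have hGx : ∀ x, Measurable fun y => ‖G (x - y)‖ₑ := fun x =>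
    (hG.comp (measurable_const.sub measurable_id)).enorm
  have hprod : AEMeasurable (fun p : ℝ × ℝ => ‖G (p.1 - p.2)‖ₑ ^ 2 * ‖f p.2‖ₑ)
      (volume.prod volume) :=
    ((hG.comp (measurable_fst.sub measurable_snd)).enorm.pow_const 2).aemeasurable.mul
      hf.enorm.comp_snd
  have hpointwise : ∀ x, ‖conv G f x‖ₑ ^ 2 ≤ (∫⁻ y, ‖G (x - y)‖ₑ ^ 2 * ‖f y‖ₑ) * N := by
    intro x
    calc ‖conv G f x‖ₑ ^ 2 ≤ (∫⁻ y, ‖G (x - y)‖ₑ * ‖f y‖ₑ) ^ 2 := by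
          gcongr
          simpa only [conv, enorm_mul] using
            enorm_integral_le_lintegral_enorm fun y => G (x - y) * f y
      _ ≤ _ := ENNReal.lintegral_mul_sq_le (hGx x).aemeasurable hf.enorm
  calc ∫⁻ x, ‖conv G f x‖ₑ ^ 2
      ≤ ∫⁻ x, (∫⁻ y, ‖G (x - y)‖ₑ ^ 2 * ‖f y‖ₑ) * N := lintegral_mono hpointwise
    _ = (∫⁻ y, ∫⁻ x, ‖G (x - y)‖ₑ ^ 2 * ‖f y‖ₑ) * N := by
        rw [lintegral_mul_const'' _ hprod.lintegral_prod_right', lintegral_lintegral_swap hprod]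
    _ = (∫⁻ y, (∫⁻ z, ‖G z‖ₑ ^ 2) * ‖f y‖ₑ) * N := by
        congr 1
        refine lintegral_congr fun y => ?_
        have hm : Measurable fun x => ‖G (x - y)‖ₑ ^ 2 :=
          (hG.comp (measurable_id.sub_const y)).enorm.pow_const 2
        rw [lintegral_mul_const'' _ hm.aemeasurable,
          lintegral_sub_right_eq_self (fun z => ‖G z‖ₑ ^ 2) y]
    _ = (∫⁻ z, ‖G z‖ₑ ^ 2) * N ^ 2 := by
        rw [lintegral_const_mul'' _ hf.enorm]; ring

theorem G2x_eq (x : ℝ) : G2x x = -2 * SignType.sign x * G2 x := by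
  rw [G2x, G2, Real.sign_eq_coe_sign]; ring

theorem continuous_G2 : Continuous G2 := by unfold G2; fun_prop

theorem measurable_G2x : Measurable G2x := by
  unfold G2x
  exact (measurable_const.mul Real.monotone_sign.measurable).mul (by fun_prop)

theorem hasDerivAt_G2 {z : ℝ} (hz : z ≠ 0) : HasDerivAt G2 (G2x z) z := by
  refine ((((hasDerivAt_abs hz).const_mul 2).neg.exp).const_mul (1 / 4 : ℝ)).congr_deriv ?_
  simp only [G2x_eq, G2, Pi.neg_apply]; ring

theorem continuousAt_G2x {z : ℝ} (hz : z ≠ 0) : ContinuousAt G2x z := by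
  rw [show G2x = fun x => -2 * (SignType.sign x : ℝ) * G2 x from funext G2x_eq]
  have : ContinuousAt (fun x : ℝ => ((SignType.sign x : SignType) : ℝ)) z :=
    (continuous_of_discreteTopology (f := ((↑) : SignType → ℝ))).continuousAt.comp
      (continuousAt_sign_of_ne_zero hz)
  exact (continuousAt_const.mul this).mul continuous_G2.continuousAt

theorem norm_G2_le (x : ℝ) : ‖G2 x‖ ≤ 1 / 4 := by
  rw [G2, norm_of_nonneg (by positivity)]
  have : exp (-(2 * |x|)) ≤ 1 := exp_le_one_iff.2 (by linarith [abs_nonneg x])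
  linarith

theorem norm_G2x_le (x : ℝ) : ‖G2x x‖ ≤ 1 / 2 := by
  have hs : ‖(SignType.sign x : ℝ)‖ ≤ 1 := by
    rcases SignType.sign x with _ | _ | _ <;> simp
  calc ‖G2x x‖ = 2 * ‖(SignType.sign x : ℝ)‖ * ‖G2 x‖ := by simp [G2x_eq]
    _ ≤ 2 * 1 * (1 / 4) := by gcongr; exact norm_G2_le x
    _ = 1 / 2 := by norm_num

theorem lipschitzWith_G2 : LipschitzWith (1 / 2) G2 := by
  refine LipschitzWith.of_dist_le_mul fun t s => ?_
  have hFTC : ∫ u in s..t, G2x u = G2 t - G2 s :=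
    integral_eq_of_hasDerivAt_off_countable _ _ (countable_singleton 0) continuous_G2.continuousOn
      (fun x hx => hasDerivAt_G2 hx.2)
      (intervalIntegrable_const.mono_fun' (f := G2x) measurable_G2x.aestronglyMeasurable
        (ae_of_all _ norm_G2x_le))
  rw [dist_eq_norm, dist_eq_norm, ← hFTC]
  simpa using intervalIntegral.norm_integral_le_of_norm_le_const fun u _ => norm_G2x_le u

theorem sq_G2 (x : ℝ) : G2 x ^ 2 = 1 / 16 * exp (-(4 * |x|)) := by
  rw [G2, mul_pow, ← exp_nat_mul]; ring_nf

theorem sq_G2x {x : ℝ} (hx : x ≠ 0) : G2x x ^ 2 = 1 / 4 * exp (-(4 * |x|)) := by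
  have hs : (SignType.sign x : ℝ) ^ 2 = 1 := by
    rcases hx.lt_or_gt with h | h <;> simp [h]
  rw [G2x_eq, mul_pow, mul_pow, hs, sq_G2]; ring

theorem sq_eLpNorm_G2 : eLpNorm G2 2 volume ^ 2 = ENNReal.ofReal (1 / 32) := by
  have h : (fun x => G2 x ^ 2) = fun x => 1 / 16 * exp (-(4 * |x|)) := funext sq_G2
  rw [sq_eLpNorm_two_eq_ofReal_integral
    (by rw [h]; exact (integrable_exp_neg_mul_abs four_pos).const_mul _), h,
    integral_const_mul, integral_exp_neg_mul_abs four_pos]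
  norm_num

theorem sq_eLpNorm_G2x : eLpNorm G2x 2 volume ^ 2 = ENNReal.ofReal (1 / 8) := by
  have h : (fun x => G2x x ^ 2) =ᵐ[volume] fun x => 1 / 4 * exp (-(4 * |x|)) := by
    filter_upwards [volume.ae_ne 0] with x hx using sq_G2x hx
  rw [sq_eLpNorm_two_eq_ofReal_integral
    (((integrable_exp_neg_mul_abs four_pos).const_mul _).congr h.symm), integral_congr_ae h,
    integral_const_mul, integral_exp_neg_mul_abs four_pos]
  norm_num

theorem H1_bound_of_G2_conv_general (f : ℝ → ℝ) (hfi : Integrable f)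
    (b : ℝ → ℝ) (hb : b = conv G2 f) :
    (∀ x : ℝ, HasDerivAt b (conv G2x f x) x) ∧ Continuous (deriv b) ∧
      MemLp b 2 volume ∧ MemLp (deriv b) 2 volume ∧
      eLpNorm b 2 volume ^ 2 + eLpNorm (deriv b) 2 volume ^ 2
        ≤ (5 / 32) * eLpNorm f 1 volume ^ 2 := by
  subst hb
  have hderiv (x : ℝ) : HasDerivAt (conv G2 f) (conv G2x f x) x :=
    hasDerivAt_conv lipschitzWith_G2 norm_G2_le measurable_G2x (fun _ => hasDerivAt_G2) hfi x
  have hcont : Continuous (conv G2x f) :=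
    continuous_conv measurable_G2x norm_G2x_le (fun _ => continuousAt_G2x) hfi
  have hbc : Continuous (conv G2 f) := Differentiable.continuous fun x => (hderiv x).differentiableAt
  rw [show deriv (conv G2 f) = conv G2x f from funext fun x => (hderiv x).deriv]
  have hL2 := sq_eLpNorm_conv_le continuous_G2.measurable hfi.aemeasurable
  have hL2' := sq_eLpNorm_conv_le measurable_G2x hfi.aemeasurable
  rw [sq_eLpNorm_G2] at hL2
  rw [sq_eLpNorm_G2x] at hL2'
  have hf : eLpNorm f 1 volume ^ 2 < ⊤ :=
    ENNReal.pow_lt_top (memLp_one_iff_integrable.2 hfi).eLpNorm_lt_top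
  have memLp_of_sq_le {g : ℝ → ℝ} (hg : Continuous g) {c : ℝ}
      (h : eLpNorm g 2 volume ^ 2 ≤ ENNReal.ofReal c * eLpNorm f 1 volume ^ 2) : MemLp g 2 :=
    ⟨hg.aestronglyMeasurable, by
      simpa using h.trans_lt (ENNReal.mul_lt_top ENNReal.ofReal_lt_top hf)⟩
  refine ⟨hderiv, hcont, memLp_of_sq_le hbc hL2, memLp_of_sq_le hcont hL2', ?_⟩
  calc _ ≤ ENNReal.ofReal (1 / 32) * eLpNorm f 1 volume ^ 2
        + ENNReal.ofReal (1 / 8) * eLpNorm f 1 volume ^ 2 := add_le_add hL2 hL2'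
    _ = (5 / 32) * eLpNorm f 1 volume ^ 2 := by
        rw [← add_mul, ← ENNReal.ofReal_add (by norm_num) (by norm_num),
          show (1 / 32 + 1 / 8 : ℝ) = 5 / 32 by norm_num, ENNReal.ofReal_div_of_pos (by norm_num)]
        norm_num

/-- If `f` is continuous and integrable and `b = G₂ ∗ f`, then `b` is
continuously differentiable with `b' = ∂ₓG₂ ∗ f`, both `b` and `b'` are in `L²`, and
`‖b‖_{L²}² + ‖b'‖_{L²}² ≤ (5/32) ‖f‖_{L¹}²`. -/
theorem H1_bound_of_G2_conv (f : ℝ → ℝ) (hfc : Continuous f) (hfi : Integrable f)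
    (b : ℝ → ℝ) (hb : b = conv G2 f) :
    (∀ x : ℝ, HasDerivAt b (conv G2x f x) x) ∧ Continuous (deriv b) ∧
      MemLp b 2 volume ∧ MemLp (deriv b) 2 volume ∧
      eLpNorm b 2 volume ^ 2 + eLpNorm (deriv b) 2 volume ^ 2
        ≤ (5 / 32) * eLpNorm f 1 volume ^ 2 :=
  H1_bound_of_G2_conv_general f hfi b hb
end

section
/- Let T>0 and M₁, M₂ ≥ 0. Let a, b, c, u : [0,T]×ℝ → ℝ be smooth functions such that for every t ∈ [0,T] the section x ↦ u(t,x) is a Schwartz function with all Schwartz seminorms bounded uniformly for t in [0,T], u ≥ 0 on [0,T]×ℝ, |b_x| ≤ M₁ and |a_x c_x − a c| ≤ M₂ on [0,T]×ℝ, and u_t = u_x b + (3/2) u b_x − (3/2) u (a_x c_x − a c) on [0,T]×ℝ. Then for every t ∈ [0,T], ‖u(t,·)‖_{L¹(ℝ)} ≤ e^{(M₁/2 + 3M₂/2) t} ‖u(0,·)‖_{L¹(ℝ)}. -/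
open Set MeasureTheory Filter Topology

private lemma aux_y_cube (y : ℝ) (hy : 0 ≤ y) : y ≤ 1 + y ^ 3 ∧ y ^ 2 ≤ 1 + y ^ 3 := by
  constructor <;> nlinarith [sq_nonneg (y - 1), sq_nonneg (y + 1), sq_nonneg y, pow_nonneg hy 3]

private lemma aux_int {f : ℝ → ℝ} (hf : Continuous f) {C : ℝ}
    (h : ∀ x, |f x| * (1 + x ^ 2) ≤ C) : Integrable f := by
  refine (integrable_inv_one_add_sq.const_mul C).mono' hf.aestronglyMeasurable
    (ae_of_all _ fun x => ?_)
  have hx : (0:ℝ) < 1 + x ^ 2 := by positivity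
  rw [Real.norm_eq_abs, show C * (1 + x ^ 2)⁻¹ = C / (1 + x ^ 2) by ring, le_div_iff₀ hx]
  exact h x

private lemma aux_tendsto_top {f : ℝ → ℝ} {C : ℝ}
    (h : ∀ x, |f x| * (1 + x ^ 2) ≤ C) : Tendsto f atTop (nhds 0) := by
  have h1 : Tendsto (fun x : ℝ => 1 + x ^ 2) atTop atTop :=
    tendsto_atTop_add_const_left _ 1 (tendsto_pow_atTop two_ne_zero)
  have h2 : Tendsto (fun x : ℝ => C * (1 + x ^ 2)⁻¹) atTop (nhds 0) := by
    simpa using (h1.inv_tendsto_atTop).const_mul C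
  refine squeeze_zero_norm (fun x => ?_) h2
  have hx : (0:ℝ) < 1 + x ^ 2 := by positivity
  rw [Real.norm_eq_abs, show C * (1 + x ^ 2)⁻¹ = C / (1 + x ^ 2) by ring, le_div_iff₀ hx]
  exact h x

private lemma aux_tendsto_bot {f : ℝ → ℝ} {C : ℝ}
    (h : ∀ x, |f x| * (1 + x ^ 2) ≤ C) : Tendsto f atBot (nhds 0) := by
  have h1 : Tendsto (fun x : ℝ => 1 + x ^ 2) atBot atTop := by
    have := (tendsto_pow_atTop (α := ℝ) (n := 2) two_ne_zero).comp tendsto_neg_atBot_atTop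
    refine tendsto_atTop_add_const_left _ 1 ?_
    simpa [Function.comp_def, neg_sq] using this
  have h2 : Tendsto (fun x : ℝ => C * (1 + x ^ 2)⁻¹) atBot (nhds 0) := by
    simpa using (h1.inv_tendsto_atTop).const_mul C
  refine squeeze_zero_norm (fun x => ?_) h2
  have hx : (0:ℝ) < 1 + x ^ 2 := by positivity
  rw [Real.norm_eq_abs, show C * (1 + x ^ 2)⁻¹ = C / (1 + x ^ 2) by ring, le_div_iff₀ hx]
  exact h x

private lemma aux_ibp {φ φ' : ℝ → ℝ} (hφ : ∀ x, HasDerivAt φ (φ' x) x)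
    (hint : Integrable φ') (htop : Tendsto φ atTop (nhds 0))
    (hbot : Tendsto φ atBot (nhds 0)) : ∫ x, φ' x = 0 := by
  have h1 : ∫ x in Ioi (0:ℝ), φ' x = 0 - φ 0 :=
    integral_Ioi_of_hasDerivAt_of_tendsto (hφ 0).continuousAt.continuousWithinAt
      (fun x _ => hφ x) hint.integrableOn htop
  have h2 : ∫ x in Iic (0:ℝ), φ' x = φ 0 - 0 :=
    integral_Iic_of_hasDerivAt_of_tendsto (hφ 0).continuousAt.continuousWithinAt
      (fun x _ => hφ x) hint.integrableOn hbot
  rw [← intervalIntegral.integral_Iic_add_Ioi hint.integrableOn hint.integrableOn, h1, h2]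
  ring

private lemma aux_abs3 (p q r : ℝ) : |p + q - r| ≤ |p| + |q| + |r| := by
  have h1 := abs_sub (p + q) r
  have h2 := abs_add_le p q
  linarith

/-- L¹-estimate of Lemma 2.3. For smooth `a, b, c, u` on `[0,T] × ℝ` with
Schwartz sections of `u` uniformly in `t`, `u ≥ 0`, `|b_x| ≤ M₁`, `|a_x c_x - a c| ≤ M₂`,
and `u_t = u_x b + (3/2) u b_x - (3/2) u (a_x c_x - a c)`, we have
`‖u(t)‖_{L¹} ≤ e^{(M₁/2 + 3M₂/2) t} ‖u(0)‖_{L¹}`. -/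
theorem L1_estimate_u (T : ℝ) (hT : 0 < T) (M₁ M₂ : ℝ) (hM₁ : 0 ≤ M₁) (hM₂ : 0 ≤ M₂)
    (a b c u : ℝ → ℝ → ℝ)
    (hasm : ContDiff ℝ (⊤ : ℕ∞) (fun p : ℝ × ℝ => a p.1 p.2))
    (hbsm : ContDiff ℝ (⊤ : ℕ∞) (fun p : ℝ × ℝ => b p.1 p.2))
    (hcsm : ContDiff ℝ (⊤ : ℕ∞) (fun p : ℝ × ℝ => c p.1 p.2))
    (husm : ContDiff ℝ (⊤ : ℕ∞) (fun p : ℝ × ℝ => u p.1 p.2))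
    (hdecay : ∀ k n : ℕ, ∃ C : ℝ, ∀ t ∈ Icc (0 : ℝ) T, ∀ x : ℝ,
      |x| ^ k * |iteratedDeriv n (u t) x| ≤ C)
    (hupos : ∀ t ∈ Icc (0 : ℝ) T, ∀ x : ℝ, 0 ≤ u t x)
    (hbx : ∀ t ∈ Icc (0 : ℝ) T, ∀ x : ℝ, |deriv (b t) x| ≤ M₁)
    (hac : ∀ t ∈ Icc (0 : ℝ) T, ∀ x : ℝ,
      |deriv (a t) x * deriv (c t) x - a t x * c t x| ≤ M₂)
    (heq : ∀ t ∈ Icc (0 : ℝ) T, ∀ x : ℝ,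
      deriv (fun s => u s x) t
        = deriv (u t) x * b t x + (3 / 2) * u t x * deriv (b t) x
            - (3 / 2) * u t x * (deriv (a t) x * deriv (c t) x - a t x * c t x)) :
    ∀ t ∈ Icc (0 : ℝ) T,
      eLpNorm (u t) 1 volume
        ≤ ENNReal.ofReal (Real.exp ((M₁ / 2 + 3 * M₂ / 2) * t)) * eLpNorm (u 0) 1 volume := by
  intro t ht
  set K : ℝ := M₁ / 2 + 3 * M₂ / 2 with hKdef
  have hK0 : 0 ≤ K := by rw [hKdef]; linarith
  have h0T : (0:ℝ) ∈ Icc 0 T := ⟨le_rfl, hT.le⟩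
  -- smoothness of sections
  have husec : ∀ s : ℝ, ContDiff ℝ (⊤ : ℕ∞) (u s) := fun s =>
    husm.comp ((contDiff_const (c := s)).prodMk contDiff_id)
  have hbsec : ∀ s : ℝ, ContDiff ℝ (⊤ : ℕ∞) (b s) := fun s =>
    hbsm.comp ((contDiff_const (c := s)).prodMk contDiff_id)
  have hasec : ∀ s : ℝ, ContDiff ℝ (⊤ : ℕ∞) (a s) := fun s =>
    hasm.comp ((contDiff_const (c := s)).prodMk contDiff_id)
  have hcsec : ∀ s : ℝ, ContDiff ℝ (⊤ : ℕ∞) (c s) := fun s =>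
    hcsm.comp ((contDiff_const (c := s)).prodMk contDiff_id)
  have htsec : ∀ x : ℝ, ContDiff ℝ (⊤ : ℕ∞) (fun s => u s x) := fun x =>
    husm.comp (contDiff_id.prodMk (contDiff_const (c := x)))
  have hucont : ∀ s : ℝ, Continuous (u s) := fun s => (husec s).continuous
  have hut_deriv : ∀ (r x : ℝ), HasDerivAt (fun s => u s x) (deriv (fun s => u s x) r) r :=
    fun r x => (((htsec x).differentiable (by simp)) r).hasDerivAt
  -- decay constants
  obtain ⟨C₀, hC₀⟩ := hdecay 0 0
  obtain ⟨C₃, hC₃⟩ := hdecay 3 0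
  obtain ⟨D₀, hD₀⟩ := hdecay 0 1
  obtain ⟨D₃, hD₃⟩ := hdecay 3 1
  simp only [iteratedDeriv_zero, iteratedDeriv_one, pow_zero, one_mul] at hC₀ hC₃ hD₀ hD₃
  have hC₀0 : 0 ≤ C₀ := (abs_nonneg _).trans (hC₀ 0 h0T 0)
  have hC₃0 : 0 ≤ C₃ :=
    (mul_nonneg (by positivity) (abs_nonneg _)).trans (hC₃ 0 h0T 0)
  have hD₀0 : 0 ≤ D₀ := (abs_nonneg _).trans (hD₀ 0 h0T 0)
  have hD₃0 : 0 ≤ D₃ :=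
    (mul_nonneg (by positivity) (abs_nonneg _)).trans (hD₃ 0 h0T 0)
  -- bound on b
  obtain ⟨B, hB⟩ : ∃ B, ∀ s ∈ Icc (0:ℝ) T, |b s 0| ≤ B := by
    obtain ⟨B, hB⟩ := isCompact_Icc.exists_bound_of_continuousOn
      (s := Icc (0:ℝ) T)
      (Continuous.continuousOn
        (hbsm.continuous.comp (continuous_id.prodMk continuous_const)))
    exact ⟨B, fun s hs => by simpa [Real.norm_eq_abs] using hB s hs⟩
  have hB0 : 0 ≤ B := (abs_nonneg _).trans (hB 0 h0T)
  have hbbound : ∀ s ∈ Icc (0:ℝ) T, ∀ x : ℝ, |b s x| ≤ B + M₁ * |x| := by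
    intro s hs x
    have hmvt : ‖b s x - b s 0‖ ≤ M₁ * ‖x - 0‖ :=
      Convex.norm_image_sub_le_of_norm_hasDerivWithin_le
        (f := b s) (f' := deriv (b s)) (s := univ)
        (fun y _ => (((hbsec s).differentiable (by simp)) y).hasDerivAt.hasDerivWithinAt)
        (fun y _ => by simpa [Real.norm_eq_abs] using hbx s hs y)
        convex_univ (mem_univ 0) (mem_univ x)
    rw [Real.norm_eq_abs, Real.norm_eq_abs, sub_zero] at hmvt
    have : |b s x| ≤ |b s x - b s 0| + |b s 0| := by
      have := abs_add_le (b s x - b s 0) (b s 0)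
      simpa using this
    have hb0 := hB s hs
    linarith
  -- decay of u and its x-derivative with weight (1+x²)
  have hudec : ∀ s ∈ Icc (0:ℝ) T, ∀ x : ℝ, |u s x| * (1 + x ^ 2) ≤ 2 * (C₀ + C₃) := by
    intro s hs x
    obtain ⟨hy1, hy2⟩ := aux_y_cube |x| (abs_nonneg x)
    have h1 := hC₀ s hs x
    have h2 := hC₃ s hs x
    nlinarith [abs_nonneg (u s x), mul_le_mul_of_nonneg_left hy2 (abs_nonneg (u s x)),
      sq_abs x]
  have hdudec : ∀ s ∈ Icc (0:ℝ) T, ∀ x : ℝ,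
      |deriv (u s) x| * (1 + x ^ 2) ≤ 2 * (D₀ + D₃) := by
    intro s hs x
    obtain ⟨hy1, hy2⟩ := aux_y_cube |x| (abs_nonneg x)
    have h1 := hD₀ s hs x
    have h2 := hD₃ s hs x
    nlinarith [abs_nonneg (deriv (u s) x),
      mul_le_mul_of_nonneg_left hy2 (abs_nonneg (deriv (u s) x)), sq_abs x]
  have hpoly : ∀ y : ℝ, 0 ≤ y →
      (B + M₁ * y) * (1 + y ^ 2) ≤ 4 * (B + M₁) * (1 + y ^ 3) := by
    intro y hy
    obtain ⟨hy1, hy2⟩ := aux_y_cube y hy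
    nlinarith [mul_le_mul_of_nonneg_left hy2 hB0, mul_le_mul_of_nonneg_left hy1 hM₁,
      mul_nonneg hB0 (pow_nonneg hy 3), mul_nonneg hM₁ (pow_nonneg hy 3)]
  -- generic bound for products with b
  have hmulb : ∀ s ∈ Icc (0:ℝ) T, ∀ x : ℝ, ∀ (v P Q : ℝ), 0 ≤ v → v ≤ P →
      |x| ^ 3 * v ≤ Q → v * |b s x| * (1 + x ^ 2) ≤ 4 * (B + M₁) * (P + Q) := by
    intro s hs x v P Q hv hP hQ
    have hb' := hbbound s hs x
    have hx2 : (0:ℝ) < 1 + x ^ 2 := by positivity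
    have h1 : v * |b s x| * (1 + x ^ 2) ≤ v * ((B + M₁ * |x|) * (1 + |x| ^ 2)) := by
      rw [sq_abs]
      calc v * |b s x| * (1 + x ^ 2) = v * (|b s x| * (1 + x ^ 2)) := by ring
        _ ≤ v * ((B + M₁ * |x|) * (1 + x ^ 2)) :=
          mul_le_mul_of_nonneg_left (mul_le_mul_of_nonneg_right hb' hx2.le) hv
    have h2 := hpoly |x| (abs_nonneg x)
    calc v * |b s x| * (1 + x ^ 2) ≤ v * (4 * (B + M₁) * (1 + |x| ^ 3)) :=
          h1.trans (mul_le_mul_of_nonneg_left h2 hv)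
      _ = 4 * (B + M₁) * (v + |x| ^ 3 * v) := by ring
      _ ≤ 4 * (B + M₁) * (P + Q) :=
          mul_le_mul_of_nonneg_left (add_le_add hP hQ) (by positivity)
  -- decay of the time derivative
  have hutdec : ∀ s ∈ Icc (0:ℝ) T, ∀ x : ℝ,
      |deriv (fun r => u r x) s| * (1 + x ^ 2)
        ≤ 4 * (B + M₁) * (D₀ + D₃) + 3 * (M₁ + M₂) * (C₀ + C₃) := by
    intro s hs x
    rw [heq s hs x]
    have hx2 : (0:ℝ) ≤ 1 + x ^ 2 := by positivity
    have e1 : |deriv (u s) x * b s x + 3 / 2 * u s x * deriv (b s) x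
          - 3 / 2 * u s x * (deriv (a s) x * deriv (c s) x - a s x * c s x)|
        ≤ |deriv (u s) x| * |b s x| + 3 / 2 * |u s x| * M₁ + 3 / 2 * |u s x| * M₂ := by
      have h3 := aux_abs3 (deriv (u s) x * b s x) (3 / 2 * u s x * deriv (b s) x)
        (3 / 2 * u s x * (deriv (a s) x * deriv (c s) x - a s x * c s x))
      have e2 : |3 / 2 * u s x * deriv (b s) x| ≤ 3 / 2 * |u s x| * M₁ := by
        rw [abs_mul, abs_mul, show |(3:ℝ)/2| = 3/2 by norm_num]
        exact mul_le_mul_of_nonneg_left (hbx s hs x) (by positivity)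
      have e3 : |3 / 2 * u s x * (deriv (a s) x * deriv (c s) x - a s x * c s x)|
          ≤ 3 / 2 * |u s x| * M₂ := by
        rw [abs_mul, abs_mul, show |(3:ℝ)/2| = 3/2 by norm_num]
        exact mul_le_mul_of_nonneg_left (hac s hs x) (by positivity)
      rw [abs_mul] at h3
      linarith
    calc |deriv (u s) x * b s x + 3 / 2 * u s x * deriv (b s) x
          - 3 / 2 * u s x * (deriv (a s) x * deriv (c s) x - a s x * c s x)| * (1 + x ^ 2)
        ≤ (|deriv (u s) x| * |b s x| + 3 / 2 * |u s x| * M₁ + 3 / 2 * |u s x| * M₂)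
            * (1 + x ^ 2) := mul_le_mul_of_nonneg_right e1 hx2
      _ = |deriv (u s) x| * |b s x| * (1 + x ^ 2)
            + 3 / 2 * (M₁ + M₂) * (|u s x| * (1 + x ^ 2)) := by ring
      _ ≤ 4 * (B + M₁) * (D₀ + D₃) + 3 / 2 * (M₁ + M₂) * (2 * (C₀ + C₃)) := by
          refine add_le_add
            (hmulb s hs x _ _ _ (abs_nonneg _) (hD₀ s hs x) (hD₃ s hs x))
            (mul_le_mul_of_nonneg_left (hudec s hs x) (by positivity))
      _ = 4 * (B + M₁) * (D₀ + D₃) + 3 * (M₁ + M₂) * (C₀ + C₃) := by ring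
  have hutbound : ∀ s ∈ Icc (0:ℝ) T, ∀ x : ℝ,
      ‖deriv (fun r => u r x) s‖
        ≤ (4 * (B + M₁) * (D₀ + D₃) + 3 * (M₁ + M₂) * (C₀ + C₃)) / (1 + x ^ 2) := by
    intro s hs x
    rw [Real.norm_eq_abs, le_div_iff₀ (by positivity)]
    exact hutdec s hs x
  -- integrability
  have huint : ∀ s ∈ Icc (0:ℝ) T, Integrable (u s) := fun s hs =>
    aux_int (hucont s) (hudec s hs)
  have hutcont : ∀ s ∈ Icc (0:ℝ) T, Continuous (fun x => deriv (fun r => u r x) s) := by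
    intro s hs
    have e : (fun x => deriv (fun r => u r x) s) = fun x =>
        deriv (u s) x * b s x + 3 / 2 * u s x * deriv (b s) x
          - 3 / 2 * u s x * (deriv (a s) x * deriv (c s) x - a s x * c s x) :=
      funext fun x => heq s hs x
    rw [e]
    exact ((((husec s).continuous_deriv (by simp)).mul (hbsec s).continuous).add
      ((continuous_const.mul (hucont s)).mul ((hbsec s).continuous_deriv (by simp)))).sub
      ((continuous_const.mul (hucont s)).mul
        ((((hasec s).continuous_deriv (by simp)).mul ((hcsec s).continuous_deriv (by simp))).sub
          ((hasec s).continuous.mul (hcsec s).continuous)))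
  have hutint : ∀ s ∈ Icc (0:ℝ) T, Integrable (fun x => deriv (fun r => u r x) s) :=
    fun s hs => aux_int (hutcont s hs) (hutdec s hs)
  -- the mass function
  set F : ℝ → ℝ := fun s => ∫ x, u s x with hFdef
  have hFnn : ∀ s ∈ Icc (0:ℝ) T, 0 ≤ F s := fun s hs =>
    integral_nonneg fun x => hupos s hs x
  have hFcont : ContinuousOn F (Icc 0 T) := by
    intro s₀ hs₀
    apply continuousWithinAt_of_dominated (bound := fun x => 2 * (C₀ + C₃) / (1 + x ^ 2))
    · exact Eventually.of_forall fun s => (hucont s).aestronglyMeasurable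
    · filter_upwards [self_mem_nhdsWithin] with s hs
      exact ae_of_all _ fun x => by
        rw [Real.norm_eq_abs, le_div_iff₀ (by positivity)]
        exact hudec s hs x
    · simpa [div_eq_mul_inv] using integrable_inv_one_add_sq.const_mul (2 * (C₀ + C₃))
    · exact ae_of_all _ fun x => ((htsec x).continuous.continuousAt).continuousWithinAt
  have hbd_int : Integrable (fun x : ℝ =>
      (4 * (B + M₁) * (D₀ + D₃) + 3 * (M₁ + M₂) * (C₀ + C₃)) / (1 + x ^ 2)) := by
    have := integrable_inv_one_add_sq.const_mul
      (4 * (B + M₁) * (D₀ + D₃) + 3 * (M₁ + M₂) * (C₀ + C₃))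
    simpa [div_eq_mul_inv] using this
  -- derivative of F in the interior
  have hder : ∀ r ∈ Ioo (0:ℝ) T, HasDerivAt F (∫ x, deriv (fun s => u s x) r) r := by
    intro r hr
    have hε : 0 < min r (T - r) := lt_min hr.1 (sub_pos.2 hr.2)
    have hball : Metric.ball r (min r (T - r)) ⊆ Icc 0 T := by
      intro s hs
      rw [Metric.mem_ball, Real.dist_eq] at hs
      have h1 := abs_lt.1 hs
      have h2 := min_le_left r (T - r)
      have h3 := min_le_right r (T - r)
      constructor <;> [linarith; linarith]
    exact (hasDerivAt_integral_of_dominated_loc_of_deriv_le (Metric.ball_mem_nhds r hε)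
      (F := u) (F' := fun s x => deriv (fun s' => u s' x) s)
      (bound := fun x => (4 * (B + M₁) * (D₀ + D₃) + 3 * (M₁ + M₂) * (C₀ + C₃)) / (1 + x ^ 2))
      (Eventually.of_forall fun s => (hucont s).aestronglyMeasurable)
      (huint r (Ioo_subset_Icc_self hr))
      ((hutcont r (Ioo_subset_Icc_self hr)).aestronglyMeasurable)
      (ae_of_all _ fun x s hs => hutbound s (hball hs) x)
      hbd_int
      (ae_of_all _ fun x s _ => hut_deriv s x)).2
  -- integration by parts: the flux term integrates to zero
  have hφ'int : ∀ s ∈ Icc (0:ℝ) T,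
      Integrable (fun x => deriv (u s) x * b s x + u s x * deriv (b s) x) := by
    intro s hs
    apply aux_int
    · exact (((husec s).continuous_deriv (by simp)).mul (hbsec s).continuous).add
        ((hucont s).mul ((hbsec s).continuous_deriv (by simp)))
    · intro x
      have hx2 : (0:ℝ) ≤ 1 + x ^ 2 := by positivity
      have q1 : |deriv (u s) x * b s x| * (1 + x ^ 2) ≤ 4 * (B + M₁) * (D₀ + D₃) := by
        rw [abs_mul]
        exact hmulb s hs x _ _ _ (abs_nonneg _) (hD₀ s hs x) (hD₃ s hs x)
      have q2 : |u s x * deriv (b s) x| * (1 + x ^ 2) ≤ M₁ * (2 * (C₀ + C₃)) := by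
        rw [abs_mul]
        calc |u s x| * |deriv (b s) x| * (1 + x ^ 2)
            ≤ |u s x| * M₁ * (1 + x ^ 2) := by
              refine mul_le_mul_of_nonneg_right
                (mul_le_mul_of_nonneg_left (hbx s hs x) (abs_nonneg _)) hx2
          _ = M₁ * (|u s x| * (1 + x ^ 2)) := by ring
          _ ≤ M₁ * (2 * (C₀ + C₃)) := mul_le_mul_of_nonneg_left (hudec s hs x) hM₁
      calc |deriv (u s) x * b s x + u s x * deriv (b s) x| * (1 + x ^ 2)
          ≤ (|deriv (u s) x * b s x| + |u s x * deriv (b s) x|) * (1 + x ^ 2) :=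
            mul_le_mul_of_nonneg_right (abs_add_le _ _) hx2
        _ = |deriv (u s) x * b s x| * (1 + x ^ 2)
              + |u s x * deriv (b s) x| * (1 + x ^ 2) := add_mul _ _ _
        _ ≤ 4 * (B + M₁) * (D₀ + D₃) + M₁ * (2 * (C₀ + C₃)) := add_le_add q1 q2
  have hibp : ∀ s ∈ Icc (0:ℝ) T,
      (∫ x, (deriv (u s) x * b s x + u s x * deriv (b s) x)) = 0 := by
    intro s hs
    have hφtail : ∀ x : ℝ, |u s x * b s x| * (1 + x ^ 2) ≤ 4 * (B + M₁) * (C₀ + C₃) := by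
      intro x
      rw [abs_mul]
      exact hmulb s hs x _ _ _ (abs_nonneg _) (hC₀ s hs x) (hC₃ s hs x)
    exact aux_ibp
      (fun x => (((husec s).differentiable (by simp) x).hasDerivAt.mul
        (((hbsec s).differentiable (by simp) x).hasDerivAt)))
      (hφ'int s hs) (aux_tendsto_top hφtail) (aux_tendsto_bot hφtail)
  -- bound on the derivative of F
  have hF'bound : ∀ s ∈ Icc (0:ℝ) T,
      |∫ x, deriv (fun r => u r x) s| ≤ K * F s := by
    intro s hs
    set ψ : ℝ → ℝ := fun x => 1 / 2 * u s x * deriv (b s) x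
      - 3 / 2 * u s x * (deriv (a s) x * deriv (c s) x - a s x * c s x) with hψdef
    have hψcont : Continuous ψ := by
      rw [hψdef]
      exact ((continuous_const.mul (hucont s)).mul ((hbsec s).continuous_deriv (by simp))).sub
        ((continuous_const.mul (hucont s)).mul
          ((((hasec s).continuous_deriv (by simp)).mul ((hcsec s).continuous_deriv (by simp))).sub
            ((hasec s).continuous.mul (hcsec s).continuous)))
    have hψbound : ∀ x : ℝ, |ψ x| ≤ K * u s x := by
      intro x
      have h1 := hbx s hs x
      have h2 := hac s hs x
      have h3 := hupos s hs x
      have e1 : |1 / 2 * u s x * deriv (b s) x| ≤ 1 / 2 * |u s x| * M₁ := by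
        rw [abs_mul, abs_mul, show |(1:ℝ)/2| = 1/2 by norm_num]
        exact mul_le_mul_of_nonneg_left h1 (by positivity)
      have e2 : |3 / 2 * u s x * (deriv (a s) x * deriv (c s) x - a s x * c s x)|
          ≤ 3 / 2 * |u s x| * M₂ := by
        rw [abs_mul, abs_mul, show |(3:ℝ)/2| = 3/2 by norm_num]
        exact mul_le_mul_of_nonneg_left h2 (by positivity)
      have h4 := abs_sub (1 / 2 * u s x * deriv (b s) x)
        (3 / 2 * u s x * (deriv (a s) x * deriv (c s) x - a s x * c s x))
      rw [abs_of_nonneg h3] at e1 e2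
      rw [hψdef, hKdef]
      simp only
      nlinarith
    have hψint : Integrable ψ := by
      refine (((huint s hs).const_mul K)).mono' hψcont.aestronglyMeasurable
        (ae_of_all _ fun x => ?_)
      rw [Real.norm_eq_abs]
      exact hψbound x
    have hsplit : (fun x => deriv (fun r => u r x) s)
        = fun x => (deriv (u s) x * b s x + u s x * deriv (b s) x) + ψ x := by
      funext x
      rw [heq s hs x, hψdef]
      ring
    calc |∫ x, deriv (fun r => u r x) s|
        = |(∫ x, (deriv (u s) x * b s x + u s x * deriv (b s) x)) + ∫ x, ψ x| := by
          rw [hsplit, integral_add (hφ'int s hs) hψint]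
      _ = |∫ x, ψ x| := by rw [hibp s hs, zero_add]
      _ ≤ ∫ x, |ψ x| := by
          simpa [Real.norm_eq_abs] using norm_integral_le_integral_norm (μ := volume) ψ
      _ ≤ ∫ x, K * u s x := by
          refine integral_mono hψint.abs ((huint s hs).const_mul K) fun x => hψbound x
      _ = K * F s := by rw [hFdef]; exact integral_const_mul K (u s)
  -- Gronwall and the limit s → 0⁺
  rcases eq_or_lt_of_le ht.1 with h0 | h0
  · rw [← h0]
    simp [Real.exp_zero]
  · have key : F t ≤ F 0 * Real.exp (K * t) := by
      have hgron : ∀ s ∈ Ioc (0:ℝ) t, F t ≤ F s * Real.exp (K * (t - s)) := by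
        intro s hs
        have hst : Icc s t ⊆ Icc 0 T := Icc_subset_Icc hs.1.le ht.2
        have h1 := norm_le_gronwallBound_of_norm_deriv_right_le (f := F)
          (f' := fun r => ∫ x, deriv (fun s' => u s' x) r) (δ := ‖F s‖) (K := K) (ε := 0)
          (a := s) (b := t)
          (hFcont.mono hst)
          (fun r hr => (hder r ⟨hs.1.trans_le hr.1, lt_of_lt_of_le hr.2 ht.2⟩).hasDerivWithinAt)
          le_rfl
          (fun r hr => by
            have hrT : r ∈ Icc (0:ℝ) T := hst ⟨hr.1, hr.2.le⟩
            rw [add_zero, Real.norm_eq_abs, Real.norm_eq_abs, abs_of_nonneg (hFnn r hrT)]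
            exact hF'bound r hrT)
          t ⟨hs.2, le_rfl⟩
        rw [gronwallBound_ε0, Real.norm_eq_abs, Real.norm_eq_abs,
          abs_of_nonneg (hFnn t ht), abs_of_nonneg (hFnn s (hst ⟨le_rfl, hs.2⟩))] at h1
        exact h1
      have hne : (𝓝[Ioc (0:ℝ) t] 0).NeBot := by
        apply mem_closure_iff_nhdsWithin_neBot.mp
        rw [closure_Ioc h0.ne]
        exact ⟨le_rfl, h0.le⟩
      have htsub : Ioc (0:ℝ) t ⊆ Icc 0 T := fun r hr => ⟨hr.1.le, hr.2.trans ht.2⟩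
      have hFt : Tendsto F (𝓝[Ioc (0:ℝ) t] 0) (𝓝 (F 0)) :=
        (hFcont 0 h0T).mono_left (nhdsWithin_mono 0 htsub)
      have hexp : Tendsto (fun s => Real.exp (K * (t - s))) (𝓝[Ioc (0:ℝ) t] 0)
          (𝓝 (Real.exp (K * t))) := by
        have hc : Continuous fun s : ℝ => Real.exp (K * (t - s)) :=
          Real.continuous_exp.comp (continuous_const.mul (continuous_const.sub continuous_id))
        have := (hc.tendsto 0).mono_left (nhdsWithin_le_nhds (s := Ioc (0:ℝ) t))
        simpa using this
      exact ge_of_tendsto (hFt.mul hexp)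
        (by filter_upwards [self_mem_nhdsWithin] with s hs using hgron s hs)
    have elp : ∀ r, r ∈ Icc (0:ℝ) T → eLpNorm (u r) 1 volume = ENNReal.ofReal (F r) := by
      intro r hr
      rw [eLpNorm_one_eq_lintegral_enorm, ← ofReal_integral_norm_eq_lintegral_enorm (huint r hr)]
      congr 1
      refine integral_congr_ae (ae_of_all _ fun x => ?_)
      show ‖u r x‖ = u r x
      rw [Real.norm_eq_abs, abs_of_nonneg (hupos r hr x)]
    rw [elp t ht, elp 0 h0T, ← ENNReal.ofReal_mul (Real.exp_nonneg _)]
    exact ENNReal.ofReal_le_ofReal (by nlinarith [Real.exp_nonneg (K * t)])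
end

section
/- Let T>0. Let b : [0,T]×ℝ → ℝ be continuously differentiable with b and b_x bounded, let h : [0,T]×ℝ → ℝ be continuous and bounded, and let u : [0,T]×ℝ → ℝ be continuously differentiable with u and u_x bounded, satisfying u_t(t,x) = b(t,x) u_x(t,x) + h(t,x) u(t,x) for all (t,x) ∈ [0,T]×ℝ. If u(0,x) ≥ 0 for all x ∈ ℝ, then u(t,x) ≥ 0 for all (t,x) ∈ [0,T]×ℝ. -/
open Set
open scoped NNReal

/-- transport-positivity principle. If `u_t = b u_x + h u` on `[0,T] × ℝ`
with `b` C¹ (`b`, `b_x` bounded), `h` continuous bounded, `u` C¹ (`u`, `u_x` bounded),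
and `u(0,·) ≥ 0`, then `u ≥ 0` on `[0,T] × ℝ`. -/
theorem transport_positivity (T : ℝ) (hT : 0 < T) (b h u : ℝ → ℝ → ℝ)
    (hb : ContDiff ℝ 1 (fun p : ℝ × ℝ => b p.1 p.2))
    (hbbd : ∃ C : ℝ, ∀ t ∈ Icc (0 : ℝ) T, ∀ x : ℝ, |b t x| ≤ C ∧ |deriv (b t) x| ≤ C)
    (hhc : Continuous (fun p : ℝ × ℝ => h p.1 p.2))
    (hhbd : ∃ C : ℝ, ∀ t ∈ Icc (0 : ℝ) T, ∀ x : ℝ, |h t x| ≤ C)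
    (hu : ContDiff ℝ 1 (fun p : ℝ × ℝ => u p.1 p.2))
    (hubd : ∃ C : ℝ, ∀ t ∈ Icc (0 : ℝ) T, ∀ x : ℝ, |u t x| ≤ C ∧ |deriv (u t) x| ≤ C)
    (heq : ∀ t ∈ Icc (0 : ℝ) T, ∀ x : ℝ,
      deriv (fun s => u s x) t = b t x * deriv (u t) x + h t x * u t x)
    (h0 : ∀ x : ℝ, 0 ≤ u 0 x) :
    ∀ t ∈ Icc (0 : ℝ) T, ∀ x : ℝ, 0 ≤ u t x := by
  obtain ⟨Cb, hCb⟩ := hbbd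
  intro t ht x
  set C' : ℝ := max Cb 0 with hC'
  have hC0 : (0:ℝ) ≤ C' := le_max_right _ _
  set L : ℝ≥0 := ⟨C', hC0⟩ with hL
  have hbc : Continuous (fun p : ℝ × ℝ => b p.1 p.2) := hb.continuous
  have hbdiff : Differentiable ℝ (fun p : ℝ × ℝ => b p.1 p.2) := hb.differentiable one_ne_zero
  -- Picard-Lindelöf for v s y = -b s y
  have hpl : IsPicardLindelof (fun s y => -b s y) (tmin := 0) (tmax := T) ⟨t, ht⟩ x
      ⟨C' * T, by positivity⟩ 0 L L := by
    refine ⟨?_, ?_, ?_, ?_⟩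
    · intro s hs
      have hdiff : Differentiable ℝ (b s) := by
        intro y
        have : DifferentiableAt ℝ ((fun p : ℝ × ℝ => b p.1 p.2) ∘ (fun y' : ℝ => (s, y'))) y :=
          DifferentiableAt.comp y (hbdiff (s, y))
            (DifferentiableAt.prodMk (differentiableAt_const s) differentiableAt_id)
        exact this
      have lip : LipschitzWith L (b s) := by
        apply lipschitzWith_of_nnnorm_deriv_le hdiff
        intro y
        rw [← NNReal.coe_le_coe]
        calc ‖deriv (b s) y‖ = |deriv (b s) y| := rfl
          _ ≤ Cb := (hCb s hs y).2
          _ ≤ C' := le_max_left _ _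
      have lip2 : LipschitzWith L (fun y : ℝ => -b s y) := lip.neg
      exact lip2.lipschitzOnWith
    · intro y _
      exact ((hbc.comp (continuous_id.prodMk continuous_const)).neg).continuousOn
    · intro s hs y _
      calc ‖-b s y‖ = |b s y| := by rw [norm_neg]; rfl
        _ ≤ Cb := (hCb s hs y).1
        _ ≤ C' := le_max_left _ _
    · have h1 : max (T - t) (t - 0) ≤ T := by
        rcases ht with ⟨ht0, htT⟩
        apply max_le <;> linarith
      show C' * max (T - t) (t - 0) ≤ C' * T - 0
      rw [sub_zero (C' * T)]
      calc C' * max (T - t) (t - 0) ≤ C' * T := by nlinarith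
        _ = C' * T := rfl
  obtain ⟨f, hft, hf⟩ := hpl.exists_eq_forall_mem_Icc_hasDerivWithinAt₀
  have hfc : ContinuousOn f (Icc 0 T) := fun s hs => (hf s hs).continuousWithinAt
  -- slice derivatives of u
  have hU : Differentiable ℝ (fun p : ℝ × ℝ => u p.1 p.2) := hu.differentiable one_ne_zero
  set U : ℝ × ℝ → ℝ := fun p => u p.1 p.2 with hUdef
  have hslice1 : ∀ s y : ℝ, deriv (fun s' => u s' y) s = fderiv ℝ U (s, y) (1, 0) := by
    intro s y
    have h2 : HasDerivAt (fun s' : ℝ => (s', y)) ((1:ℝ), (0:ℝ)) s :=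
      HasDerivAt.prodMk (hasDerivAt_id s) (hasDerivAt_const s y)
    exact ((hU (s, y)).hasFDerivAt.comp_hasDerivAt s h2).deriv
  have hslice2 : ∀ s y : ℝ, deriv (u s) y = fderiv ℝ U (s, y) (0, 1) := by
    intro s y
    have h2 : HasDerivAt (fun y' : ℝ => (s, y')) ((0:ℝ), (1:ℝ)) y :=
      HasDerivAt.prodMk (hasDerivAt_const y s) (hasDerivAt_id y)
    exact ((hU (s, y)).hasFDerivAt.comp_hasDerivAt y h2).deriv
  -- g and its derivative on Icc
  set g : ℝ → ℝ := fun s => u s (f s) with hg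
  have hgd : ∀ s ∈ Icc (0:ℝ) T,
      HasDerivWithinAt g (h s (f s) * g s) (Icc 0 T) s := by
    intro s hs
    have hsf : HasDerivWithinAt (fun s' => (s', f s')) ((1:ℝ), -b s (f s)) (Icc 0 T) s :=
      HasDerivWithinAt.prodMk (hasDerivWithinAt_id s _) (hf s hs)
    have := (hU (s, f s)).hasFDerivAt.comp_hasDerivWithinAt s hsf
    have hval : fderiv ℝ U (s, f s) (1, -b s (f s)) = h s (f s) * g s := by
      have hdecomp : ((1:ℝ), -b s (f s)) = ((1:ℝ), (0:ℝ)) + (-b s (f s)) • ((0:ℝ), (1:ℝ)) := by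
        simp
      rw [hdecomp, map_add, map_smul, ← hslice1, ← hslice2, heq s hs (f s)]
      simp only [smul_eq_mul]
      ring
    rw [← hval]
    exact this
  -- clamp and integrating factor
  set c : ℝ → ℝ := fun s => max 0 (min s T) with hc
  have hcc : Continuous c := continuous_const.max (continuous_id.min continuous_const)
  have hcmem : ∀ s, c s ∈ Icc (0:ℝ) T := by
    intro s
    constructor
    · exact le_max_left _ _
    · exact max_le hT.le (min_le_right _ _)
  have hceq : ∀ s ∈ Icc (0:ℝ) T, c s = s := by
    intro s hs
    simp only [hc]
    rw [min_eq_left hs.2, max_eq_right hs.1]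
  set H : ℝ → ℝ := fun s => h (c s) (f (c s)) with hH
  have hHc : Continuous H := by
    have hfc2 : Continuous (fun s => f (c s)) :=
      hfc.comp_continuous hcc hcmem
    exact hhc.comp (hcc.prodMk hfc2)
  set I : ℝ → ℝ := fun s => ∫ r in (0:ℝ)..s, H r with hI
  have hId : ∀ s : ℝ, HasDerivAt I (H s) s := fun s =>
    (hHc.integral_hasStrictDerivAt 0 s).hasDerivAt
  set φ : ℝ → ℝ := fun s => g s * Real.exp (-I s) with hφ
  have hφd : ∀ s ∈ Icc (0:ℝ) T, HasDerivWithinAt φ 0 (Icc 0 T) s := by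
    intro s hs
    have he : HasDerivAt (fun s => Real.exp (-I s)) (Real.exp (-I s) * (-H s)) s :=
      (hId s).neg.exp
    have := (hgd s hs).mul he.hasDerivWithinAt
    have hval : h s (f s) * g s * Real.exp (-I s) + g s * (Real.exp (-I s) * -H s) = 0 := by
      have : H s = h s (f s) := by rw [hH]; simp only [hceq s hs]
      rw [this]; ring
    exact hval ▸ this
  have hconst : ‖φ t - φ 0‖ ≤ 0 * ‖t - 0‖ := by
    apply (convex_Icc 0 T).norm_image_sub_le_of_norm_hasDerivWithin_le
      (f' := fun _ => (0:ℝ)) hφd (fun s _ => by simp) ⟨le_refl 0, hT.le⟩ ht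
  have hφeq : φ t = φ 0 := by
    have := hconst
    rw [zero_mul] at this
    have := norm_le_zero_iff.mp this
    linarith [sub_eq_zero.mp this]
  have hI0 : I 0 = 0 := by simp [hI]
  have hφ0 : φ 0 = g 0 := by simp [hφ, hI0]
  have hg0 : 0 ≤ g 0 := h0 (f 0)
  have : u t x = g t := by rw [hg]; simp [hft]
  rw [this]
  have : g t = φ t * Real.exp (I t) := by
    rw [hφ, mul_assoc, ← Real.exp_add]
    simp
  rw [this, hφeq, hφ0]
  positivity
end

section
/- Let a, b, c : ℝ → ℝ be three times differentiable functions satisfying the constraint 4b − b'' = a''c' − c''a' + 3a'c − 3ac' on ℝ, and set u = a − a''. Then for every x ∈ ℝ: u'b + (3/2) u b' − (3/2) u (a'c' − ac) = (a'b) − (a'b)'' + ½ f₁' + ½ g₁, where f₁ = a'b' + (a')² c' + 3ab − 3a'ac and g₁ = ba' + 3a²c + 3aa'c'. -/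
/-! After `u'`, `(a'b)''` and `f₁'` are expanded by the Leibniz rule, the difference of the two
sides is `-a'/2` times the difference of the two sides of the constraint. -/

theorem deriv_deriv_mul {𝕜 : Type*} [NontriviallyNormedField 𝕜] {f g : 𝕜 → 𝕜} {x : 𝕜}
    (hf : Differentiable 𝕜 f) (hg : Differentiable 𝕜 g)
    (hf' : DifferentiableAt 𝕜 (deriv f) x) (hg' : DifferentiableAt 𝕜 (deriv g) x) :
    deriv (deriv fun y => f y * g y) x
      = deriv (deriv f) x * g x + 2 * (deriv f x * deriv g x) + f x * deriv (deriv g) x := by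
  have hderiv : deriv (fun y => f y * g y) = fun y => deriv f y * g y + f y * deriv g y :=
    funext fun y => deriv_mul (hf y) (hg y)
  rw [hderiv]
  exact (((hf'.hasDerivAt.mul (hg x).hasDerivAt).add
    ((hf x).hasDerivAt.mul hg'.hasDerivAt)).deriv).trans (by ring)

theorem hyperbolic_reformulation_first_eq_general (a b c : ℝ → ℝ)
    (ha : Differentiable ℝ a) (ha' : Differentiable ℝ (deriv a))
    (ha'' : Differentiable ℝ (deriv (deriv a)))
    (hb : Differentiable ℝ b) (hb' : Differentiable ℝ (deriv b))
    (hc : Differentiable ℝ c) (hc' : Differentiable ℝ (deriv c))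
    (hconstraint : ∀ x : ℝ,
      4 * b x - deriv (deriv b) x
        = deriv (deriv a) x * deriv c x - deriv (deriv c) x * deriv a x
            + 3 * deriv a x * c x - 3 * a x * deriv c x)
    (u f₁ g₁ : ℝ → ℝ)
    (hu : u = fun x => a x - deriv (deriv a) x)
    (hf₁ : f₁ = fun y => deriv a y * deriv b y + (deriv a y) ^ 2 * deriv c y
      + 3 * a y * b y - 3 * deriv a y * a y * c y)
    (hg₁ : g₁ = fun y => b y * deriv a y + 3 * (a y) ^ 2 * c y
      + 3 * a y * deriv a y * deriv c y) :
    ∀ x : ℝ,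
      deriv u x * b x + (3 / 2) * u x * deriv b x
          - (3 / 2) * u x * (deriv a x * deriv c x - a x * c x)
        = deriv a x * b x - deriv (deriv (fun y => deriv a y * b y)) x
            + (1 / 2) * deriv f₁ x + (1 / 2) * g₁ x := by
  subst hu hf₁ hg₁
  intro x
  have hA := (ha x).hasDerivAt
  have hA' := (ha' x).hasDerivAt
  have hB := (hb x).hasDerivAt
  have hB' := (hb' x).hasDerivAt
  have hC := (hc x).hasDerivAt
  have hC' := (hc' x).hasDerivAt
  have hu' : deriv (fun y => a y - deriv (deriv a) y) x
      = deriv a x - deriv (deriv (deriv a)) x :=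
    (hA.sub (ha'' x).hasDerivAt).deriv
  have hf₁' : deriv (fun y => deriv a y * deriv b y + deriv a y ^ 2 * deriv c y
        + 3 * a y * b y - 3 * deriv a y * a y * c y) x
      = deriv (deriv a) x * deriv b x + deriv a x * deriv (deriv b) x
        + 2 * deriv a x * deriv (deriv a) x * deriv c x + deriv a x ^ 2 * deriv (deriv c) x
        + 3 * deriv a x * b x + 3 * a x * deriv b x
        - 3 * deriv (deriv a) x * a x * c x - 3 * deriv a x ^ 2 * c x
        - 3 * deriv a x * a x * deriv c x := by
    refine ((((hA'.mul hB').add ((hA'.pow 2).mul hC')).add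
      ((hA.const_mul 3).mul hB)).sub (((hA'.const_mul 3).mul hA).mul hC)).deriv.trans ?_
    simp only [Pi.pow_apply, Pi.mul_apply]
    ring
  rw [hu', hf₁', deriv_deriv_mul ha' hb (ha'' x) (hb' x)]
  linear_combination (-(deriv a x) / 2) * hconstraint x

/-- pointwise identity underlying the hyperbolic reformulation of the first
equation: for three times differentiable `a, b, c` satisfying the constraint
`4b - b'' = a''c' - c''a' + 3a'c - 3ac'`, with `u = a - a''`,
`f₁ = a'b' + (a')²c' + 3ab - 3a'ac` and `g₁ = ba' + 3a²c + 3aa'c'`, one has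
`u'b + (3/2)ub' - (3/2)u(a'c' - ac) = (a'b) - (a'b)'' + ½ f₁' + ½ g₁`. -/
theorem hyperbolic_reformulation_first_eq (a b c : ℝ → ℝ)
    (ha : Differentiable ℝ a) (ha' : Differentiable ℝ (deriv a))
    (ha'' : Differentiable ℝ (deriv (deriv a)))
    (hb : Differentiable ℝ b) (hb' : Differentiable ℝ (deriv b))
    (hb'' : Differentiable ℝ (deriv (deriv b)))
    (hc : Differentiable ℝ c) (hc' : Differentiable ℝ (deriv c))
    (hc'' : Differentiable ℝ (deriv (deriv c)))
    (hconstraint : ∀ x : ℝ,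
      4 * b x - deriv (deriv b) x
        = deriv (deriv a) x * deriv c x - deriv (deriv c) x * deriv a x
            + 3 * deriv a x * c x - 3 * a x * deriv c x)
    (u f₁ g₁ : ℝ → ℝ)
    (hu : u = fun x => a x - deriv (deriv a) x)
    (hf₁ : f₁ = fun y => deriv a y * deriv b y + (deriv a y) ^ 2 * deriv c y
      + 3 * a y * b y - 3 * deriv a y * a y * c y)
    (hg₁ : g₁ = fun y => b y * deriv a y + 3 * (a y) ^ 2 * c y
      + 3 * a y * deriv a y * deriv c y) :
    ∀ x : ℝ,
      deriv u x * b x + (3 / 2) * u x * deriv b x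
          - (3 / 2) * u x * (deriv a x * deriv c x - a x * c x)
        = deriv a x * b x - deriv (deriv (fun y => deriv a y * b y)) x
            + (1 / 2) * deriv f₁ x + (1 / 2) * g₁ x :=
  hyperbolic_reformulation_first_eq_general a b c ha ha' ha'' hb hb' hc hc' hconstraint u f₁ g₁ hu
    hf₁ hg₁
end

section
/- Let b : ℝ → ℝ be a Schwartz function. Then for every x ∈ ℝ: ∫_ℝ G₂(x−y) b'''(y) b(y) dy = 4 ∫_ℝ G₂(x−y) b'(y) b(y) dy − b'(x) b(x) − (3/2) ∫_ℝ ∂_xG₂(x−y) (b'(y))² dy. -/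
open MeasureTheory

/-!
Since `b''' b = (b' b)'' - (3/2) ((b')²)'`, the identity reduces to two facts about the kernel,
valid for every differentiable `f` with `f` and `f'` bounded: `G₂ ∗ f' = ∂ₓG₂ ∗ f` and
`∂ₓG₂ ∗ f' = 4 G₂ ∗ f - f`. Both follow by splitting the convolution at `y = x`, where
`G₂(x - y)` is `¼ e^{2(y-x)}` on the left and `¼ e^{2(x-y)}` on the right, and integrating by
parts on each half-line. The boundary terms at `y = x` cancel in the first identity and add up
to `-f(x)`, the jump of `∂ₓG₂` at `0`, in the second.
-/

open Set Filter Topology Real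

lemma Real.measurable_sign : Measurable Real.sign :=
  Measurable.ite measurableSet_Iio measurable_const
    (Measurable.ite measurableSet_Ioi measurable_const measurable_const)

lemma integrable_exp_neg_two_mul_abs : Integrable fun z : ℝ => exp (-(2 * |z|)) := by
  rw [← integrableOn_univ, ← Iic_union_Ioi (a := 0), integrableOn_union]
  constructor
  · refine (integrableOn_exp_mul_Iic two_pos 0).congr_fun (fun z hz => ?_) measurableSet_Iic
    rw [abs_of_nonpos hz, mul_neg, neg_neg]
  · refine (integrableOn_exp_mul_Ioi (by norm_num : (-2 : ℝ) < 0) 0).congr_fun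
      (fun z (hz : 0 < z) => ?_) measurableSet_Ioi
    simp only [abs_of_pos hz, neg_mul]

lemma integrable_G2 : Integrable G2 :=
  integrable_exp_neg_two_mul_abs.const_mul _

lemma abs_G2x_le (z : ℝ) : |G2x z| ≤ 2 * G2 z := by
  have hsign : |Real.sign z| ≤ 1 := by
    rcases lt_trichotomy z 0 with hz | rfl | hz <;> simp [Real.sign_of_neg, Real.sign_of_pos, *]
  rw [G2x, G2, abs_mul, abs_mul, abs_of_pos (exp_pos _)]
  nlinarith [exp_pos (-(2 * |z|))]

lemma integrable_G2x : Integrable G2x :=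
  (integrable_G2.const_mul 2).mono'
    ((measurable_const.mul Real.measurable_sign).mul (by fun_prop)).aestronglyMeasurable
    (ae_of_all _ abs_G2x_le)

lemma G2_sub_of_le {x y : ℝ} (h : y ≤ x) : G2 (x - y) = exp (2 * (y - x)) / 4 := by
  rw [G2, abs_of_nonneg (sub_nonneg.mpr h)]; ring_nf

lemma G2_sub_of_lt {x y : ℝ} (h : x < y) : G2 (x - y) = exp (2 * (x - y)) / 4 := by
  rw [G2, abs_of_neg (sub_neg.mpr h)]; ring_nf

lemma G2x_sub_of_lt {x y : ℝ} (h : y < x) : G2x (x - y) = -(exp (2 * (y - x)) / 2) := by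
  rw [G2x, abs_of_pos (sub_pos.mpr h), Real.sign_of_pos (sub_pos.mpr h)]; ring_nf

lemma G2x_sub_of_gt {x y : ℝ} (h : x < y) : G2x (x - y) = exp (2 * (x - y)) / 2 := by
  rw [G2x, abs_of_neg (sub_neg.mpr h), Real.sign_of_neg (sub_neg.mpr h)]; ring_nf

section Bounded

variable {g : ℝ → ℝ} {C : ℝ}

lemma integrable_G2_sub_mul (hg : AEStronglyMeasurable g) (hC : ∀ y, ‖g y‖ ≤ C) (x : ℝ) :
    Integrable fun y => G2 (x - y) * g y :=
  (integrable_G2.comp_sub_left x).mul_bdd hg (ae_of_all _ hC)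

lemma integrable_G2x_sub_mul (hg : AEStronglyMeasurable g) (hC : ∀ y, ‖g y‖ ≤ C) (x : ℝ) :
    Integrable fun y => G2x (x - y) * g y :=
  (integrable_G2x.comp_sub_left x).mul_bdd hg (ae_of_all _ hC)

lemma integrableOn_exp_mul_Iic_of_bdd (hg : AEStronglyMeasurable g) (hC : ∀ y, ‖g y‖ ≤ C)
    (x : ℝ) : IntegrableOn (fun y => exp (2 * (y - x)) * g y) (Iic x) := by
  have hexp : IntegrableOn (fun y => exp (2 * (y - x))) (Iic x) := by
    refine IntegrableOn.congr_fun ((integrableOn_exp_mul_Iic two_pos x).mul_const (exp (-(2 * x))))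
      (fun y _ => ?_) measurableSet_Iic
    rw [← exp_add]; ring_nf
  exact hexp.mul_bdd hg.restrict (ae_of_all _ hC)

lemma integrableOn_exp_mul_Ioi_of_bdd (hg : AEStronglyMeasurable g) (hC : ∀ y, ‖g y‖ ≤ C)
    (x : ℝ) : IntegrableOn (fun y => exp (2 * (x - y)) * g y) (Ioi x) := by
  have hexp : IntegrableOn (fun y => exp (2 * (x - y))) (Ioi x) := by
    refine IntegrableOn.congr_fun
      ((integrableOn_exp_mul_Ioi (by norm_num : (-2 : ℝ) < 0) x).mul_const (exp (2 * x)))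
      (fun y _ => ?_) measurableSet_Ioi
    rw [← exp_add]; ring_nf
  exact hexp.mul_bdd hg.restrict (ae_of_all _ hC)

lemma integral_G2_sub_mul_eq (hg : AEStronglyMeasurable g) (hC : ∀ y, ‖g y‖ ≤ C) (x : ℝ) :
    ∫ y, G2 (x - y) * g y =
      (∫ y in Iic x, exp (2 * (y - x)) * g y) / 4 +
        (∫ y in Ioi x, exp (2 * (x - y)) * g y) / 4 := by
  have hint := integrable_G2_sub_mul hg hC x
  have hIic : ∫ y in Iic x, G2 (x - y) * g y = (∫ y in Iic x, exp (2 * (y - x)) * g y) / 4 := by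
    rw [← integral_div]
    exact setIntegral_congr_fun measurableSet_Iic fun y (hy : y ≤ x) => by
      simp only [G2_sub_of_le hy]; ring
  have hIoi : ∫ y in Ioi x, G2 (x - y) * g y = (∫ y in Ioi x, exp (2 * (x - y)) * g y) / 4 := by
    rw [← integral_div]
    exact setIntegral_congr_fun measurableSet_Ioi fun y (hy : x < y) => by
      simp only [G2_sub_of_lt hy]; ring
  rw [← intervalIntegral.integral_Iic_add_Ioi hint.integrableOn hint.integrableOn, hIic, hIoi]

lemma integral_G2x_sub_mul_eq (hg : AEStronglyMeasurable g) (hC : ∀ y, ‖g y‖ ≤ C) (x : ℝ) :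
    ∫ y, G2x (x - y) * g y =
      -(∫ y in Iic x, exp (2 * (y - x)) * g y) / 2 +
        (∫ y in Ioi x, exp (2 * (x - y)) * g y) / 2 := by
  have hint := integrable_G2x_sub_mul hg hC x
  have hIic : ∫ y in Iic x, G2x (x - y) * g y = -(∫ y in Iic x, exp (2 * (y - x)) * g y) / 2 := by
    rw [integral_Iic_eq_integral_Iio, integral_Iic_eq_integral_Iio, ← integral_neg,
      ← integral_div]
    exact setIntegral_congr_fun measurableSet_Iio fun y (hy : y < x) => by
      simp only [G2x_sub_of_lt hy]; ring
  have hIoi : ∫ y in Ioi x, G2x (x - y) * g y = (∫ y in Ioi x, exp (2 * (x - y)) * g y) / 2 := by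
    rw [← integral_div]
    exact setIntegral_congr_fun measurableSet_Ioi fun y (hy : x < y) => by
      simp only [G2x_sub_of_gt hy]; ring
  rw [← intervalIntegral.integral_Iic_add_Ioi hint.integrableOn hint.integrableOn, hIic, hIoi]

end Bounded

section BoundedDeriv

variable {f : ℝ → ℝ} {C C' : ℝ}

lemma integral_Iic_exp_mul_deriv (hf : Differentiable ℝ f) (hC : ∀ y, ‖f y‖ ≤ C)
    (hC' : ∀ y, ‖deriv f y‖ ≤ C') (x : ℝ) :
    ∫ y in Iic x, exp (2 * (y - x)) * deriv f y =
      f x - 2 * ∫ y in Iic x, exp (2 * (y - x)) * f y := by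
  have hu : ∀ y, HasDerivAt (fun y => exp (2 * (y - x))) (2 * exp (2 * (y - x))) y := fun y => by
    simpa [mul_comm] using (((hasDerivAt_id y).sub_const x).const_mul 2).exp
  have hint := integrableOn_exp_mul_Iic_of_bdd hf.continuous.aestronglyMeasurable hC x
  have h_zero : Tendsto (fun y => exp (2 * (y - x)) * f y) (𝓝[<] x) (𝓝 (f x)) := by
    have hcont : Continuous fun y => exp (2 * (y - x)) * f y := by
      have := hf.continuous; fun_prop
    simpa using (hcont.tendsto x).mono_left nhdsWithin_le_nhds
  have h_bot : Tendsto (fun y => exp (2 * (y - x)) * f y) atBot (𝓝 0) := by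
    have hlin : Tendsto (fun y : ℝ => 2 * (y - x)) atBot atBot :=
      tendsto_atBot_atBot.mpr fun c => ⟨c / 2 + x, fun y hy => by linarith⟩
    exact (tendsto_exp_atBot.comp hlin).zero_mul_isBoundedUnder_le (isBoundedUnder_of ⟨C, hC⟩)
  rw [integral_Iic_mul_deriv_eq_deriv_mul (fun y _ => hu y) (fun y _ => (hf y).hasDerivAt)
    (integrableOn_exp_mul_Iic_of_bdd (measurable_deriv f).aestronglyMeasurable hC' x)
    (by simp only [Pi.mul_def, mul_assoc]; exact hint.const_mul 2) h_zero h_bot]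
  simp only [mul_assoc, integral_const_mul, sub_zero]

lemma integral_Ioi_exp_mul_deriv (hf : Differentiable ℝ f) (hC : ∀ y, ‖f y‖ ≤ C)
    (hC' : ∀ y, ‖deriv f y‖ ≤ C') (x : ℝ) :
    ∫ y in Ioi x, exp (2 * (x - y)) * deriv f y =
      2 * (∫ y in Ioi x, exp (2 * (x - y)) * f y) - f x := by
  have hu : ∀ y, HasDerivAt (fun y => exp (2 * (x - y))) (-2 * exp (2 * (x - y))) y := fun y => by
    simpa [mul_comm] using (((hasDerivAt_id y).const_sub x).const_mul 2).exp
  have hint := integrableOn_exp_mul_Ioi_of_bdd hf.continuous.aestronglyMeasurable hC x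
  have h_zero : Tendsto (fun y => exp (2 * (x - y)) * f y) (𝓝[>] x) (𝓝 (f x)) := by
    have hcont : Continuous fun y => exp (2 * (x - y)) * f y := by
      have := hf.continuous; fun_prop
    simpa using (hcont.tendsto x).mono_left nhdsWithin_le_nhds
  have h_top : Tendsto (fun y => exp (2 * (x - y)) * f y) atTop (𝓝 0) := by
    have hlin : Tendsto (fun y : ℝ => 2 * (x - y)) atTop atBot :=
      tendsto_atTop_atBot.mpr fun c => ⟨x - c / 2, fun y hy => by linarith⟩
    exact (tendsto_exp_atBot.comp hlin).zero_mul_isBoundedUnder_le (isBoundedUnder_of ⟨C, hC⟩)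
  rw [integral_Ioi_mul_deriv_eq_deriv_mul (fun y _ => hu y) (fun y _ => (hf y).hasDerivAt)
    (integrableOn_exp_mul_Ioi_of_bdd (measurable_deriv f).aestronglyMeasurable hC' x)
    (by simp only [Pi.mul_def, mul_assoc]; exact hint.const_mul (-2)) h_zero h_top]
  simp only [mul_assoc, integral_const_mul]
  ring

theorem integral_G2_sub_mul_deriv (hf : Differentiable ℝ f) (hC : ∀ y, ‖f y‖ ≤ C)
    (hC' : ∀ y, ‖deriv f y‖ ≤ C') (x : ℝ) :
    ∫ y, G2 (x - y) * deriv f y = ∫ y, G2x (x - y) * f y := by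
  rw [integral_G2_sub_mul_eq (measurable_deriv f).aestronglyMeasurable hC',
    integral_G2x_sub_mul_eq hf.continuous.aestronglyMeasurable hC,
    integral_Iic_exp_mul_deriv hf hC hC', integral_Ioi_exp_mul_deriv hf hC hC']
  ring

theorem integral_G2x_sub_mul_deriv (hf : Differentiable ℝ f) (hC : ∀ y, ‖f y‖ ≤ C)
    (hC' : ∀ y, ‖deriv f y‖ ≤ C') (x : ℝ) :
    ∫ y, G2x (x - y) * deriv f y = 4 * (∫ y, G2 (x - y) * f y) - f x := by
  rw [integral_G2x_sub_mul_eq (measurable_deriv f).aestronglyMeasurable hC',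
    integral_G2_sub_mul_eq hf.continuous.aestronglyMeasurable hC,
    integral_Iic_exp_mul_deriv hf hC hC', integral_Ioi_exp_mul_deriv hf hC hC']
  ring

end BoundedDeriv

lemma deriv_deriv_deriv_mul_self {f : ℝ → ℝ} (hf : ContDiff ℝ 3 f) (y : ℝ) :
    deriv (deriv (deriv f)) y * f y =
      deriv (deriv fun y => deriv f y * f y) y - 3 / 2 * deriv (fun y => deriv f y ^ 2) y := by
  have h0 : Differentiable ℝ f := hf.differentiable (by norm_num)
  have h1 : Differentiable ℝ (deriv f) := by
    simpa using hf.differentiable_iteratedDeriv 1 (by norm_num)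
  have h2 : Differentiable ℝ (deriv (deriv f)) := by
    simpa [iteratedDeriv_succ] using hf.differentiable_iteratedDeriv 2 (by norm_num)
  have hprod :
      deriv (fun y => deriv f y * f y) = fun y => deriv (deriv f) y * f y + deriv f y ^ 2 := by
    funext z; rw [deriv_fun_mul (h1 z) (h0 z)]; ring
  rw [hprod, deriv_fun_add (f := fun y => deriv (deriv f) y * f y) (g := fun y => deriv f y ^ 2)
    ((h2 y).mul (h0 y)) ((h1 y).pow 2), deriv_fun_mul (h2 y) (h0 y),
    deriv_fun_pow (h1 y)]
  norm_num
  ring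

namespace SchwartzMap

variable (f : 𝓢(ℝ, ℝ))

lemma deriv_eq_derivCLM : deriv ⇑f = ⇑(derivCLM ℝ ℝ f) :=
  funext fun y => (derivCLM_apply ℝ f y).symm

lemma exists_coe_eq_mul (g : 𝓢(ℝ, ℝ)) : ∃ h : 𝓢(ℝ, ℝ), ⇑h = fun y => f y * g y :=
  ⟨smulLeftCLM ℝ (⇑f) g, funext fun y => smulLeftCLM_apply_apply f.hasTemperateGrowth g y⟩

lemma integrable_G2_sub_mul (x : ℝ) : Integrable fun y => G2 (x - y) * f y :=
  _root_.integrable_G2_sub_mul f.continuous.aestronglyMeasurable (norm_le_seminorm ℝ f) x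

theorem integral_G2_sub_mul_deriv (x : ℝ) :
    ∫ y, G2 (x - y) * deriv f y = ∫ y, G2x (x - y) * f y :=
  _root_.integral_G2_sub_mul_deriv f.differentiable (norm_le_seminorm ℝ f)
    (by simpa only [deriv_eq_derivCLM] using norm_le_seminorm ℝ (derivCLM ℝ ℝ f)) x

theorem integral_G2x_sub_mul_deriv (x : ℝ) :
    ∫ y, G2x (x - y) * deriv f y = 4 * (∫ y, G2 (x - y) * f y) - f x :=
  _root_.integral_G2x_sub_mul_deriv f.differentiable (norm_le_seminorm ℝ f)
    (by simpa only [deriv_eq_derivCLM] using norm_le_seminorm ℝ (derivCLM ℝ ℝ f)) x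

theorem integral_G2_sub_mul_deriv_deriv (x : ℝ) :
    ∫ y, G2 (x - y) * deriv (deriv f) y = 4 * (∫ y, G2 (x - y) * f y) - f x := by
  rw [deriv_eq_derivCLM f, integral_G2_sub_mul_deriv, ← deriv_eq_derivCLM,
    integral_G2x_sub_mul_deriv]

end SchwartzMap

/-- For a Schwartz function `b`,
`G₂∗(b''' b) = 4 G₂∗(b' b) - b' b - (3/2) ∂ₓG₂∗((b')²)`. -/
theorem G2_conv_bxxx_b_identity (b : SchwartzMap ℝ ℝ) :
    ∀ x : ℝ,
      (∫ y : ℝ, G2 (x - y) * (deriv (deriv (deriv (⇑b))) y * b y))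
        = 4 * (∫ y : ℝ, G2 (x - y) * (deriv (⇑b) y * b y)) - deriv (⇑b) x * b x
          - (3 / 2) * ∫ y : ℝ, G2x (x - y) * (deriv (⇑b) y) ^ 2 := by
  intro x
  obtain ⟨h, hh⟩ := (SchwartzMap.derivCLM ℝ ℝ b).exists_coe_eq_mul b
  obtain ⟨k, hk⟩ := (SchwartzMap.derivCLM ℝ ℝ b).exists_coe_eq_mul (SchwartzMap.derivCLM ℝ ℝ b)
  rw [← b.deriv_eq_derivCLM] at hh hk
  simp only [← sq] at hk
  have hh'' : Integrable fun y => G2 (x - y) * deriv (deriv h) y := by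
    simpa only [SchwartzMap.deriv_eq_derivCLM] using
      (SchwartzMap.derivCLM ℝ ℝ (SchwartzMap.derivCLM ℝ ℝ h)).integrable_G2_sub_mul x
  have hk' : Integrable fun y => G2 (x - y) * deriv k y := by
    simpa only [SchwartzMap.deriv_eq_derivCLM] using
      (SchwartzMap.derivCLM ℝ ℝ k).integrable_G2_sub_mul x
  calc (∫ y, G2 (x - y) * (deriv (deriv (deriv b)) y * b y))
      = ∫ y, G2 (x - y) * deriv (deriv h) y - 3 / 2 * (G2 (x - y) * deriv k y) := by
        congr 1; funext y
        rw [deriv_deriv_deriv_mul_self (b.smooth 3) y, hh, hk]; ring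
    _ = (∫ y, G2 (x - y) * deriv (deriv h) y) - 3 / 2 * ∫ y, G2 (x - y) * deriv k y := by
        rw [integral_sub hh'' (hk'.const_mul _), integral_const_mul]
    _ = 4 * (∫ y, G2 (x - y) * h y) - h x - 3 / 2 * ∫ y, G2x (x - y) * k y := by
        rw [h.integral_G2_sub_mul_deriv_deriv, k.integral_G2_sub_mul_deriv]
    _ = _ := by simp only [hh, hk]
end
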